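/- In the dynamic network creation game in which players' communication cost uses the temporal shortest distance, for every real atomic cost α > 0 and every number of players n ≥ 2, every Nash equilibrium s has finite social cost; equivalently, its communication temporal graph 𝒢[s] is temporally connected, i.e., d_{𝒢[s]}(u, v) < ∞ for every ordered pair of vertices u, v. -/

import Mathlib

open scoped ENNReal BigOperators

/-- A temporal path from `u` to `v`, given as a list of steps `(next vertex, time label)`.
The labelling `lab` gives, for each (ordered) pair of vertices, the set of time labels of the
edge joining them (empty if there is no edge); it is symmetric for temporal graphs arising
from strategy profiles.  The conditions say that consecutive steps use time labels belonging
to the corresponding edge, that time labels strictly increase along the path, that no vertex is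
repeated, and that the path ends at `v`. -/
def IsTemporalPath {V : Type*} (lab : V → V → Set ℕ) (u v : V) (p : List (V × ℕ)) : Prop :=
  List.Chain (fun a b => b.2 ∈ lab a.1 b.1) (u, 0) p ∧
  List.Chain' (· < ·) (p.map Prod.snd) ∧
  (u :: p.map Prod.fst).Nodup ∧
  (u :: p.map Prod.fst).getLast (List.cons_ne_nil _ _) = v

/-- The temporal shortest distance from `u` to `v`: the least number of edges of a temporal
path from `u` to `v` (`0` if `u = v`, `⊤` if there is no temporal path). -/
noncomputable def temporalDist {V : Type*} (lab : V → V → Set ℕ) (u v : V) : ℕ∞ :=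
  sInf {n : ℕ∞ | ∃ p : List (V × ℕ), IsTemporalPath lab u v p ∧ (p.length : ℕ∞) = n}

/-- The labelling of the communication temporal graph `𝒢[s]` of a strategy profile `s`:
`t` is a label of the edge `uv` iff `(u, t) ∈ s v` or `(v, t) ∈ s u`. -/
def profLab {V : Type*} (s : V → Finset (V × ℕ)) : V → V → Set ℕ :=
  fun u v => {t | (u, t) ∈ s v ∨ (v, t) ∈ s u}

/-- The (finite) set of time labels of the edge `uv` in the communication temporal graph. -/
def labelFinset {V : Type*} [DecidableEq V] (s : V → Finset (V × ℕ)) (u v : V) : Finset ℕ :=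
  (((s v).filter (fun p => p.1 = u)).image Prod.snd) ∪
    (((s u).filter (fun p => p.1 = v)).image Prod.snd)

/-- The total number of time labels `∑ e ∈ E, |λ(e)|` of the communication temporal graph
(each unordered pair is counted once, whence the division by `2`). -/
def numLabels {V : Type*} [Fintype V] [DecidableEq V] (s : V → Finset (V × ℕ)) : ℕ :=
  (∑ u : V, ∑ v : V, if u = v then 0 else (labelFinset s u v).card) / 2

/-- The number of edges `|E|` of the communication temporal graph. -/
def numEdges {V : Type*} [Fintype V] [DecidableEq V] (s : V → Finset (V × ℕ)) : ℕ :=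
  ((Finset.univ : Finset (V × V)).filter
    (fun q => q.1 ≠ q.2 ∧ (labelFinset s q.1 q.2).Nonempty)).card / 2

/-- The social cost `c[s] = α·∑_{e ∈ E} |λ(e)| + ∑_{(u,v) ∈ V×V} d_{𝒢[s]}(u,v)`
of a strategy profile `s` for atomic cost `α`. -/
noncomputable def socialCost {V : Type*} [Fintype V] [DecidableEq V]
    (α : ℝ) (s : V → Finset (V × ℕ)) : ℝ≥0∞ :=
  ENNReal.ofReal α * (numLabels s : ℝ≥0∞) +
    ∑ u : V, ∑ v : V, (temporalDist (profLab s) u v : ℝ≥0∞)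

/-- The individual cost `c[s](v) = α·|s(v)| + ∑_{w ∈ V} d_{𝒢[s]}(v,w)` of player `v`. -/
noncomputable def indivCost {V : Type*} [Fintype V]
    (α : ℝ) (s : V → Finset (V × ℕ)) (v : V) : ℝ≥0∞ :=
  ENNReal.ofReal α * ((s v).card : ℝ≥0∞) +
    ∑ w : V, (temporalDist (profLab s) v w : ℝ≥0∞)

/-- A strategy profile is a Nash equilibrium if no player can strictly decrease its individual
cost by changing only its own strategy. -/
def IsNash {V : Type*} [Fintype V] [DecidableEq V] (α : ℝ) (s : V → Finset (V × ℕ)) : Prop :=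
  ∀ (v : V) (t : Finset (V × ℕ)),
    ¬ indivCost α (Function.update s v t) v < indivCost α s v

/-- The optimal social cost `c*(α, n)`: the minimum social cost over all strategy profiles
with `n` players and atomic cost `α`. -/
noncomputable def optCost (α : ℝ) (n : ℕ) : ℝ≥0∞ :=
  ⨅ s : Fin n → Finset (Fin n × ℕ), socialCost α s

/-- The price of anarchy `PoA(α, n)`: the maximum social cost of a Nash equilibrium with `n`
players and atomic cost `α`, divided by the optimal social cost `c*(α, n)`. -/
noncomputable def PoA (α : ℝ) (n : ℕ) : ℝ≥0∞ :=
  (⨆ s : {s : Fin n → Finset (Fin n × ℕ) // IsNash α s}, socialCost α s.1) / optCost α n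

/-- The price of stability `PoS(α, n)`: the minimum social cost of a Nash equilibrium with `n`
players and atomic cost `α`, divided by the optimal social cost `c*(α, n)`. -/
noncomputable def PoS (α : ℝ) (n : ℕ) : ℝ≥0∞ :=
  (⨅ s : {s : Fin n → Finset (Fin n × ℕ) // IsNash α s}, socialCost α s.1) / optCost α n

/-! A player `u` that cannot reach some `v` has infinite individual cost, while the deviation
in which `u` buys an edge at time `0` to every player makes all of `u`'s distances at most
`1` at finite price. Hence at a Nash equilibrium every temporal distance is finite, and then so
is the social cost. -/

section TemporalDist

variable {V : Type*} (lab : V → V → Set ℕ)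

lemma temporalDist_self (u : V) : temporalDist lab u u = 0 :=
  le_antisymm
    (sInf_le ⟨[], ⟨List.isChain_singleton _, List.isChain_nil, by simp, by simp⟩, by simp⟩)
    zero_le

lemma temporalDist_le_one {u w : V} {t : ℕ} (ht : t ∈ lab u w) (hne : u ≠ w) :
    temporalDist lab u w ≤ 1 := by
  refine sInf_le ⟨[(w, t)], ⟨List.isChain_pair.2 ht,
    List.isChain_singleton _, ?_, by simp⟩, by simp⟩
  simp [hne]

end TemporalDist

section Costs

variable {V : Type*} [Fintype V] (α : ℝ) (s : V → Finset (V × ℕ))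

lemma indivCost_eq_top_of_temporalDist_eq_top {u v : V}
    (h : temporalDist (profLab s) u v = ⊤) : indivCost α s u = ⊤ := by
  rw [indivCost, ENNReal.add_eq_top, ENNReal.sum_eq_top]
  exact Or.inr ⟨v, Finset.mem_univ v, by simp [h]⟩

lemma indivCost_lt_top_of_forall_mem {u : V} (h : ∀ w, ∃ t, (w, t) ∈ s u) :
    indivCost α s u < ⊤ := by
  refine ENNReal.add_lt_top.2 ⟨ENNReal.mul_lt_top ENNReal.ofReal_lt_top (by simp),
    ENNReal.sum_lt_top.2 fun w _ => ENat.toENNReal_lt_top.2 ?_⟩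
  rcases eq_or_ne u w with rfl | hne
  · simp [temporalDist_self]
  · obtain ⟨t, ht⟩ := h w
    exact (temporalDist_le_one (profLab s) (Or.inr ht) hne).trans_lt ENat.one_lt_top

lemma socialCost_lt_top [DecidableEq V] (h : ∀ u v, temporalDist (profLab s) u v < ⊤) :
    socialCost α s < ⊤ :=
  ENNReal.add_lt_top.2 ⟨ENNReal.mul_lt_top ENNReal.ofReal_lt_top (by simp),
    ENNReal.sum_lt_top.2 fun u _ => ENNReal.sum_lt_top.2 fun v _ =>
      ENat.toENNReal_lt_top.2 (h u v)⟩

lemma IsNash.temporalDist_lt_top [DecidableEq V] {α : ℝ} {s : V → Finset (V × ℕ)}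
    (hs : IsNash α s) (u v : V) : temporalDist (profLab s) u v < ⊤ := by
  refine lt_top_iff_ne_top.2 fun h => hs u (Finset.univ.image fun w => (w, 0)) ?_
  rw [indivCost_eq_top_of_temporalDist_eq_top α s h]
  exact indivCost_lt_top_of_forall_mem α _ fun w => ⟨0, by simp⟩

end Costs

theorem statement_8_general (α : ℝ) (n : ℕ)
    (s : Fin n → Finset (Fin n × ℕ)) (hs : IsNash α s) :
    socialCost α s < ⊤ ∧ ∀ u v : Fin n, temporalDist (profLab s) u v < ⊤ :=
  ⟨socialCost_lt_top α s hs.temporalDist_lt_top, hs.temporalDist_lt_top⟩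

/-- For every atomic cost `α > 0` and every number of players `n ≥ 2`, every Nash
equilibrium has finite social cost; equivalently, its communication temporal graph is
temporally connected, i.e. all temporal distances are finite. -/
theorem statement_8 (α : ℝ) (hα : 0 < α) (n : ℕ) (hn : 2 ≤ n)
    (s : Fin n → Finset (Fin n × ℕ)) (hs : IsNash α s) :
    socialCost α s < ⊤ ∧ ∀ u v : Fin n, temporalDist (profLab s) u v < ⊤ :=
  statement_8_general α n s hs
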